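/- Let P be a partition in a set A and let B, C ⊆ R(P) with B ∩ C = ∅. Then (P/P_(B)) / (P/P_(B))_(C) = (P/P_(C)) / (P/P_(C))_(B); that is, successive quotients by the restrictions to B and to C may be performed in either order. -/
import Mathlib


namespace PartitionOps

variable {α : Type*} [DecidableEq α]

/-- The support `R(P)` of a collection of finite sets: the union of its members. -/
def supp (P : Finset (Finset α)) : Finset α := P.sup id

/-- A partition in `A`: a finite collection of pairwise disjoint nonempty finite sets. -/
def IsPartition (P : Finset (Finset α)) : Prop :=
  (∀ I ∈ P, I.Nonempty) ∧ ∀ I ∈ P, ∀ I' ∈ P, I ≠ I' → Disjoint I I'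

/-- The restriction `P_(B) = { I ∩ B : I ∈ P, I ∩ B ≠ ∅ }`. -/
def restrict (P : Finset (Finset α)) (B : Finset α) : Finset (Finset α) :=
  (P.filter fun I => (I ∩ B).Nonempty).image (· ∩ B)

/-- `R_{P,B}`: the union of the members of `P` meeting `B`. -/
def RB (P : Finset (Finset α)) (B : Finset α) : Finset α :=
  (P.filter fun I => (I ∩ B).Nonempty).sup id

/-- The quotient `P / P_(B)`: the members of `P` disjoint from `B`, together with
`R_{P,B} \ B` (omitted when empty). -/
def quot (P : Finset (Finset α)) (B : Finset α) : Finset (Finset α) :=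
  (insert (RB P B \ B) (P.filter fun I => I ∩ B = ∅)).erase ∅

/-- Quotient of `P` by a partition `Q` (meaningful when `Q` coincides with the
restriction of `P` to the support of `Q`): `P / Q := P / P_(R(Q))`. -/
def quotBy (P Q : Finset (Finset α)) : Finset (Finset α) := quot P (supp Q)

lemma mem_quot {P : Finset (Finset α)} {B X : Finset α} :
    X ∈ quot P B ↔ X ≠ ∅ ∧ (X = RB P B \ B ∨ (X ∈ P ∧ X ∩ B = ∅)) := by
  simp [quot, Finset.mem_erase, Finset.mem_insert, Finset.mem_filter]

lemma mem_RB {P : Finset (Finset α)} {B : Finset α} {x : α} :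
    x ∈ RB P B ↔ ∃ I ∈ P, (I ∩ B).Nonempty ∧ x ∈ I := by
  simp only [RB, Finset.mem_sup, Finset.mem_filter, id]
  tauto

lemma RB_quot_of_mixed {P : Finset (Finset α)} {B C : Finset α}
    (hP : ∀ I ∈ P, I.Nonempty) (hBC : Disjoint B C)
    (hm : ∃ I ∈ P, (I ∩ B).Nonempty ∧ (I ∩ C).Nonempty) :
    RB (quot P B) C = (RB P B ∪ RB P C) \ B := by
  obtain ⟨J, hJ, hJB, hJC⟩ := hm
  obtain ⟨c, hc⟩ := hJC
  rw [Finset.mem_inter] at hc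
  have hcB : c ∉ B := fun h => (Finset.disjoint_left.mp hBC h) hc.2
  have hcRB : c ∈ RB P B := mem_RB.mpr ⟨J, hJ, hJB, hc.1⟩
  ext x
  simp only [mem_RB, Finset.mem_sdiff, Finset.mem_union]
  constructor
  · rintro ⟨X, hX, hXC, hxX⟩
    rw [mem_quot] at hX
    rcases hX.2 with h | ⟨hXP, hXB⟩
    · subst h
      rw [Finset.mem_sdiff] at hxX
      exact ⟨Or.inl (mem_RB.mp hxX.1), hxX.2⟩
    · obtain ⟨y, hy⟩ := hXC
      rw [Finset.mem_inter] at hy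
      refine ⟨Or.inr (mem_RB.mp (mem_RB.mpr ⟨X, hXP, ⟨y, Finset.mem_inter.mpr hy⟩, hxX⟩)), ?_⟩
      intro hxB
      have : x ∈ X ∩ B := Finset.mem_inter.mpr ⟨hxX, hxB⟩
      simp [hXB] at this
  · rintro ⟨h | h, hxB⟩
    · have h' : x ∈ RB P B := mem_RB.mpr h
      refine ⟨RB P B \ B, ?_, ⟨c, Finset.mem_inter.mpr ⟨Finset.mem_sdiff.mpr ⟨hcRB, hcB⟩, hc.2⟩⟩,
        Finset.mem_sdiff.mpr ⟨h', hxB⟩⟩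
      rw [mem_quot]
      exact ⟨Finset.nonempty_iff_ne_empty.mp ⟨x, Finset.mem_sdiff.mpr ⟨h', hxB⟩⟩, Or.inl rfl⟩
    · obtain ⟨I, hI, hIC, hxI⟩ := h
      by_cases hIB : (I ∩ B).Nonempty
      · have hxRB : x ∈ RB P B := mem_RB.mpr ⟨I, hI, hIB, hxI⟩
        refine ⟨RB P B \ B, ?_, ⟨c, Finset.mem_inter.mpr ⟨Finset.mem_sdiff.mpr ⟨hcRB, hcB⟩, hc.2⟩⟩,
          Finset.mem_sdiff.mpr ⟨hxRB, hxB⟩⟩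
        rw [mem_quot]
        exact ⟨Finset.nonempty_iff_ne_empty.mp ⟨x, Finset.mem_sdiff.mpr ⟨hxRB, hxB⟩⟩, Or.inl rfl⟩
      · refine ⟨I, ?_, hIC, hxI⟩
        rw [mem_quot]
        exact ⟨Finset.nonempty_iff_ne_empty.mp (hP I hI),
          Or.inr ⟨hI, Finset.not_nonempty_iff_eq_empty.mp hIB⟩⟩

lemma RB_quot_of_not_mixed {P : Finset (Finset α)} {B C : Finset α}
    (hP : ∀ I ∈ P, I.Nonempty)
    (hm : ¬ ∃ I ∈ P, (I ∩ B).Nonempty ∧ (I ∩ C).Nonempty) :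
    RB (quot P B) C = RB P C := by
  ext x
  simp only [mem_RB]
  constructor
  · rintro ⟨X, hX, hXC, hxX⟩
    rw [mem_quot] at hX
    rcases hX.2 with h | ⟨hXP, hXB⟩
    · exfalso
      obtain ⟨y, hy⟩ := hXC
      rw [Finset.mem_inter, h, Finset.mem_sdiff] at hy
      obtain ⟨I, hI, hIB, hyI⟩ := mem_RB.mp hy.1.1
      exact hm ⟨I, hI, hIB, ⟨y, Finset.mem_inter.mpr ⟨hyI, hy.2⟩⟩⟩
    · exact ⟨X, hXP, hXC, hxX⟩
  · rintro ⟨I, hI, hIC, hxI⟩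
    refine ⟨I, ?_, hIC, hxI⟩
    rw [mem_quot]
    have hIB : I ∩ B = ∅ := by
      by_contra h
      exact hm ⟨I, hI, Finset.nonempty_iff_ne_empty.mpr h, hIC⟩
    exact ⟨Finset.nonempty_iff_ne_empty.mp (hP I hI), Or.inr ⟨hI, hIB⟩⟩

lemma RB_sdiff_inter_empty {P : Finset (Finset α)} {B C : Finset α}
    (hm : ¬ ∃ I ∈ P, (I ∩ B).Nonempty ∧ (I ∩ C).Nonempty) :
    (RB P B \ B) ∩ C = ∅ := by
  rw [← Finset.not_nonempty_iff_eq_empty]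
  rintro ⟨y, hy⟩
  rw [Finset.mem_inter, Finset.mem_sdiff] at hy
  obtain ⟨I, hI, hIB, hyI⟩ := mem_RB.mp hy.1.1
  exact hm ⟨I, hI, hIB, ⟨y, Finset.mem_inter.mpr ⟨hyI, hy.2⟩⟩⟩

lemma RB_sdiff_inter_nonempty {P : Finset (Finset α)} {B C : Finset α}
    (hBC : Disjoint B C)
    (hm : ∃ I ∈ P, (I ∩ B).Nonempty ∧ (I ∩ C).Nonempty) :
    ((RB P B \ B) ∩ C).Nonempty := by
  obtain ⟨I, hI, hIB, c, hc⟩ := hm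
  rw [Finset.mem_inter] at hc
  refine ⟨c, Finset.mem_inter.mpr ⟨Finset.mem_sdiff.mpr
    ⟨mem_RB.mpr ⟨I, hI, hIB, hc.1⟩, fun h => (Finset.disjoint_left.mp hBC h) hc.2⟩, hc.2⟩⟩

/-- for `B, C ⊆ R(P)` with `B ∩ C = ∅`, successive quotients by the
restrictions to `B` and to `C` may be performed in either order:
`(P/P_(B)) / (P/P_(B))_(C) = (P/P_(C)) / (P/P_(C))_(B)`. -/
theorem quot_quot_comm (P : Finset (Finset α)) (hP : IsPartition P)
    (B C : Finset α) (hB : B ⊆ supp P) (hC : C ⊆ supp P) (hBC : Disjoint B C) :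
    quot (quot P B) C = quot (quot P C) B := by
  by_cases hm : ∃ I ∈ P, (I ∩ B).Nonempty ∧ (I ∩ C).Nonempty
  · have hm' : ∃ I ∈ P, (I ∩ C).Nonempty ∧ (I ∩ B).Nonempty := by
      obtain ⟨I, hI, h1, h2⟩ := hm; exact ⟨I, hI, h2, h1⟩
    have hDB : ∀ X : Finset α, X = RB P B \ B → X ∩ C ≠ ∅ := by
      rintro X rfl
      exact Finset.nonempty_iff_ne_empty.mp (RB_sdiff_inter_nonempty hBC hm)
    have hDC : ∀ X : Finset α, X = RB P C \ C → X ∩ B ≠ ∅ := by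
      rintro X rfl
      exact Finset.nonempty_iff_ne_empty.mp (RB_sdiff_inter_nonempty hBC.symm hm')
    have hE : ((RB P B ∪ RB P C) \ B) \ C = ((RB P C ∪ RB P B) \ C) \ B := by
      ext y
      simp only [Finset.mem_sdiff, Finset.mem_union]
      tauto
    ext X
    rw [mem_quot, mem_quot, mem_quot, mem_quot,
      RB_quot_of_mixed hP.1 hBC hm, RB_quot_of_mixed hP.1 hBC.symm hm', hE]
    constructor
    · rintro ⟨hne, h | ⟨⟨-, hD | ⟨hXP, hXB⟩⟩, hXC⟩⟩
      · exact ⟨hne, Or.inl h⟩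
      · exact absurd hXC (hDB X hD)
      · exact ⟨hne, Or.inr ⟨⟨hne, Or.inr ⟨hXP, hXC⟩⟩, hXB⟩⟩
    · rintro ⟨hne, h | ⟨⟨-, hD | ⟨hXP, hXC⟩⟩, hXB⟩⟩
      · exact ⟨hne, Or.inl h⟩
      · exact absurd hXB (hDC X hD)
      · exact ⟨hne, Or.inr ⟨⟨hne, Or.inr ⟨hXP, hXB⟩⟩, hXC⟩⟩
  · have hm' : ¬ ∃ I ∈ P, (I ∩ C).Nonempty ∧ (I ∩ B).Nonempty := by
      rintro ⟨I, hI, h1, h2⟩; exact hm ⟨I, hI, h2, h1⟩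
    have hDB : ∀ X : Finset α, X = RB P B \ B → X ∩ C = ∅ := by
      rintro X rfl; exact RB_sdiff_inter_empty hm
    have hDC : ∀ X : Finset α, X = RB P C \ C → X ∩ B = ∅ := by
      rintro X rfl; exact RB_sdiff_inter_empty hm'
    ext X
    rw [mem_quot, mem_quot, mem_quot, mem_quot,
      RB_quot_of_not_mixed hP.1 hm, RB_quot_of_not_mixed hP.1 hm']
    constructor
    · rintro ⟨hne, h | ⟨⟨-, hD | ⟨hXP, hXB⟩⟩, hXC⟩⟩
      · exact ⟨hne, Or.inr ⟨⟨hne, Or.inl h⟩, hDC X h⟩⟩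
      · exact ⟨hne, Or.inl hD⟩
      · exact ⟨hne, Or.inr ⟨⟨hne, Or.inr ⟨hXP, hXC⟩⟩, hXB⟩⟩
    · rintro ⟨hne, h | ⟨⟨-, hD | ⟨hXP, hXC⟩⟩, hXB⟩⟩
      · exact ⟨hne, Or.inr ⟨⟨hne, Or.inl h⟩, hDB X h⟩⟩
      · exact ⟨hne, Or.inl hD⟩
      · exact ⟨hne, Or.inr ⟨⟨hne, Or.inr ⟨hXP, hXB⟩⟩, hXC⟩⟩

end PartitionOps
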